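/- For d×d PSD matrices K₁, K₂ with unit diagonals, the joint matrix entropy is bounded below by each marginal: max{H_α(K₁), H_α(K₂)} ≤ H_α(K₁ ⊙ K₂), for α-order Rényi matrix entropy. -/

import Mathlib

open Matrix Real

/-- Eigenvalues of a matrix (as given by the spectral theorem when it is Hermitian). -/
noncomputable def eigs {d : ℕ} (K : Matrix (Fin d) (Fin d) ℝ) : Fin d → ℝ :=
  if h : K.IsHermitian then h.eigenvalues else 0

/-- Von Neumann (matrix) entropy `H₁(K) = -tr((K/d) log (K/d))`, via the spectrum. -/
noncomputable def vnEntropy {d : ℕ} (K : Matrix (Fin d) (Fin d) ℝ) : ℝ :=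
  -∑ i, (eigs K i / d) * Real.log (eigs K i / d)

/-- Matrix-based α-order Rényi entropy `H_α(K) = (1/(1-α)) log tr((K/d)^α)`,
with the case α = 1 being the von Neumann entropy. -/
noncomputable def mEntropy {d : ℕ} (α : ℝ) (K : Matrix (Fin d) (Fin d) ℝ) : ℝ :=
  if α = 1 then vnEntropy K
  else (1 / (1 - α)) * Real.log (∑ i, (eigs K i / d) ^ α)

/-- Matrix logarithm of a Hermitian matrix via functional calculus. -/
noncomputable def mlog {d : ℕ} (K : Matrix (Fin d) (Fin d) ℝ) : Matrix (Fin d) (Fin d) ℝ :=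
  if h : K.IsHermitian then h.cfc Real.log else 0

/-- Matrix KL divergence `KL(A‖B) = tr[A(log A - log B)]`. -/
noncomputable def matKL {d : ℕ} (A B : Matrix (Fin d) (Fin d) ℝ) : ℝ :=
  (A * (mlog A - mlog B)).trace

/-!
Write `A = ∑ᵢ λᵢ uᵢ uᵢᵀ` with orthonormal eigenvectors `uᵢ`, and let `wⱼ` be orthonormal
eigenvectors of `A ⊙ B`. Then the eigenvalues of `A ⊙ B` are
`μⱼ = wⱼᵀ (A ⊙ B) wⱼ = ∑ᵢ λᵢ (wⱼ ∘ uᵢ)ᵀ B (wⱼ ∘ uᵢ)`. The weights `(wⱼ ∘ uᵢ)ᵀ B (wⱼ ∘ uᵢ)` are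
nonnegative because `B` is positive semidefinite, and, because `B` has unit diagonal and both
families are orthonormal bases, each row and each column of them sums to `1`. So the normalized
spectrum of `A ⊙ B` is the image of that of `A` under a doubly stochastic matrix, which can only
increase the Rényi entropy (Jensen's inequality for `x ↦ x ^ α` or `x ↦ x log x`, applied row by
row). The same holds with `A` and `B` swapped.
-/

section

variable {n : Type*} [Fintype n]

noncomputable def renyiEntropy (α : ℝ) (p : n → ℝ) : ℝ :=
  if α = 1 then -∑ i, p i * log (p i) else 1 / (1 - α) * log (∑ i, p i ^ α)

theorem sum_rpow_pos_of_sum_eq_one {p : n → ℝ} (hp : ∀ i, 0 ≤ p i) (hp1 : ∑ i, p i = 1) (α : ℝ) :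
    0 < ∑ i, p i ^ α := by
  obtain ⟨i, -, hi⟩ := Finset.exists_ne_zero_of_sum_ne_zero (hp1.trans_ne one_ne_zero)
  exact Finset.sum_pos' (fun j _ => rpow_nonneg (hp j) α)
    ⟨i, Finset.mem_univ i, rpow_pos_of_pos ((hp i).lt_of_ne' hi) α⟩

variable [DecidableEq n]

theorem ConvexOn.sum_comp_mulVec_le {s : Set ℝ} {f : ℝ → ℝ} (hf : ConvexOn ℝ s f)
    {S : Matrix n n ℝ} (hS : S ∈ doublyStochastic ℝ n) {x : n → ℝ} (hx : ∀ i, x i ∈ s) :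
    ∑ j, f ((S *ᵥ x) j) ≤ ∑ i, f (x i) :=
  calc ∑ j, f ((S *ᵥ x) j) ≤ ∑ j, ∑ i, S j i * f (x i) := by
        gcongr with j
        simpa [mulVec, dotProduct] using
          hf.map_sum_le (fun i _ => nonneg_of_mem_doublyStochastic hS)
            (sum_row_of_mem_doublyStochastic hS j) (fun i _ => hx i)
    _ = ∑ i, f (x i) := by
        rw [Finset.sum_comm]
        simp [← Finset.sum_mul, sum_col_of_mem_doublyStochastic hS]

theorem renyiEntropy_le_renyiEntropy_mulVec {α : ℝ} (hα : 0 < α) {S : Matrix n n ℝ}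
    (hS : S ∈ doublyStochastic ℝ n) {p : n → ℝ} (hp : ∀ i, 0 ≤ p i) (hp1 : ∑ i, p i = 1) :
    renyiEntropy α p ≤ renyiEntropy α (S *ᵥ p) := by
  have hSp : ∀ j, 0 ≤ (S *ᵥ p) j := fun j =>
    Finset.sum_nonneg fun i _ => mul_nonneg (nonneg_of_mem_doublyStochastic hS) (hp i)
  have hSp1 : ∑ j, (S *ᵥ p) j = 1 := (sum_mulVec_of_mem_doublyStochastic hS).trans hp1
  unfold renyiEntropy
  rcases lt_trichotomy α 1 with hlt | rfl | hgt
  · have hsum : ∑ i, p i ^ α ≤ ∑ j, (S *ᵥ p) j ^ α := by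
      simpa using ((strictConcaveOn_rpow hα hlt).concaveOn.neg.sum_comp_mulVec_le hS hp)
    rw [if_neg hlt.ne, if_neg hlt.ne]
    gcongr
    exact sum_rpow_pos_of_sum_eq_one hp hp1 α
  · simpa using convexOn_mul_log.sum_comp_mulVec_le hS hp
  · have hsum : ∑ j, (S *ᵥ p) j ^ α ≤ ∑ i, p i ^ α :=
      (convexOn_rpow hgt.le).sum_comp_mulVec_le hS hp
    rw [if_neg hgt.ne', if_neg hgt.ne']
    refine mul_le_mul_of_nonpos_left ?_ (by rw [one_div, inv_nonpos]; linarith)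
    exact log_le_log (sum_rpow_pos_of_sum_eq_one hSp hSp1 α) hsum

theorem Matrix.dotProduct_hadamard_mulVec (U B : Matrix n n ℝ) (c x : n → ℝ) :
    x ⬝ᵥ ((U * diagonal c * Uᵀ) ⊙ B) *ᵥ x = ∑ i, c i * ((x * Uᵀ i) ⬝ᵥ B *ᵥ (x * Uᵀ i)) := by
  simp only [dotProduct, mulVec, hadamard_apply, mul_apply, diagonal_apply, transpose_apply,
    Pi.mul_apply, mul_ite, mul_zero, Finset.sum_ite_eq', Finset.mem_univ, if_true,
    Finset.sum_mul, Finset.mul_sum]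
  conv_lhs => enter [2, p]; rw [Finset.sum_comm]
  rw [Finset.sum_comm]
  exact Finset.sum_congr rfl fun i _ => Finset.sum_congr rfl fun p _ =>
    Finset.sum_congr rfl fun q _ => by ring

theorem Matrix.sum_dotProduct_mul_transpose_mulVec {U : Matrix n n ℝ} (hU : U ∈ orthogonalGroup n ℝ)
    {B : Matrix n n ℝ} (hB : ∀ i, B i i = 1) (x : n → ℝ) :
    ∑ i, (x * Uᵀ i) ⬝ᵥ B *ᵥ (x * Uᵀ i) = x ⬝ᵥ x := by
  have hU1 : U * Uᵀ = 1 := (mem_orthogonalGroup_iff n ℝ).1 hU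
  have hB1 : (1 : Matrix n n ℝ) ⊙ B = 1 := by
    rw [one_hadamard, ← diagonal_one]
    exact congrArg diagonal (funext hB)
  simpa [hU1, hB1] using (dotProduct_hadamard_mulVec U B 1 x).symm

theorem Matrix.dotProduct_self_transpose_of_mem_orthogonalGroup {U : Matrix n n ℝ}
    (hU : U ∈ orthogonalGroup n ℝ) (j : n) : Uᵀ j ⬝ᵥ Uᵀ j = 1 := by
  have h := congrFun (congrFun ((mem_orthogonalGroup_iff' n ℝ).1 hU) j) j
  rwa [mul_apply', one_apply_eq] at h

noncomputable def Matrix.schurWeights (B W U : Matrix n n ℝ) : Matrix n n ℝ :=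
  of fun j i => (Wᵀ j * Uᵀ i) ⬝ᵥ B *ᵥ (Wᵀ j * Uᵀ i)

theorem Matrix.schurWeights_mem_doublyStochastic {B W U : Matrix n n ℝ} (hB : B.PosSemidef)
    (hdiag : ∀ i, B i i = 1) (hW : W ∈ orthogonalGroup n ℝ) (hU : U ∈ orthogonalGroup n ℝ) :
    schurWeights B W U ∈ doublyStochastic ℝ n := by
  refine mem_doublyStochastic_iff_sum.2 ⟨fun j i => ?_, fun j => ?_, fun i => ?_⟩
  · simpa [schurWeights] using hB.dotProduct_mulVec_nonneg (Wᵀ j * Uᵀ i)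
  · simp [schurWeights, sum_dotProduct_mul_transpose_mulVec hU hdiag,
      dotProduct_self_transpose_of_mem_orthogonalGroup hW]
  · simp [schurWeights, mul_comm (Wᵀ _), sum_dotProduct_mul_transpose_mulVec hW hdiag,
      dotProduct_self_transpose_of_mem_orthogonalGroup hU]

theorem Matrix.IsHermitian.eq_mul_diagonal_eigenvalues_mul_transpose {A : Matrix n n ℝ}
    (hA : A.IsHermitian) :
    A = (hA.eigenvectorUnitary : Matrix n n ℝ) * diagonal hA.eigenvalues *
      (hA.eigenvectorUnitary : Matrix n n ℝ)ᵀ := by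
  conv_lhs => rw [hA.spectral_theorem]
  simp [Unitary.conjStarAlgAut_apply, RCLike.ofReal_real_eq_id, star_eq_conjTranspose]

theorem Matrix.IsHermitian.eigenvalues_hadamard {A B : Matrix n n ℝ} (hA : A.IsHermitian)
    (hAB : (A ⊙ B).IsHermitian) :
    hAB.eigenvalues =
      schurWeights B hAB.eigenvectorUnitary hA.eigenvectorUnitary *ᵥ hA.eigenvalues := by
  ext j
  have h := dotProduct_hadamard_mulVec hA.eigenvectorUnitary B hA.eigenvalues
    (hAB.eigenvectorUnitaryᵀ j)
  rw [← hA.eq_mul_diagonal_eigenvalues_mul_transpose] at h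
  simp only [eigenvectorUnitary_transpose_apply] at h
  simp only [hAB.eigenvalues_eq, star_trivial, RCLike.re_to_real, h]
  simp [schurWeights, mulVec, dotProduct, mul_comm]

end

theorem eigs_eq_eigenvalues {d : ℕ} {K : Matrix (Fin d) (Fin d) ℝ} (hK : K.IsHermitian) :
    eigs K = hK.eigenvalues :=
  dif_pos hK

theorem mEntropy_eq_renyiEntropy {d : ℕ} (α : ℝ) (K : Matrix (Fin d) (Fin d) ℝ) :
    mEntropy α K = renyiEntropy α (fun i => eigs K i / d) :=
  rfl

theorem sum_eigs_div_eq_one {d : ℕ} (hd : 0 < d) {K : Matrix (Fin d) (Fin d) ℝ}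
    (hK : K.IsHermitian) (hdiag : ∀ i, K i i = 1) : ∑ i, eigs K i / d = 1 := by
  have htr : ∑ i, hK.eigenvalues i = d := by
    simpa [trace, hdiag] using hK.trace_eq_sum_eigenvalues.symm
  rw [← Finset.sum_div, eigs_eq_eigenvalues hK, htr]
  exact div_self (Nat.cast_pos.2 hd).ne'

theorem mEntropy_le_mEntropy_hadamard {d : ℕ} (hd : 0 < d) {α : ℝ} (hα : 0 < α)
    {A B : Matrix (Fin d) (Fin d) ℝ} (hA : A.PosSemidef) (hB : B.PosSemidef)
    (hdiagA : ∀ i, A i i = 1) (hdiagB : ∀ i, B i i = 1) :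
    mEntropy α A ≤ mEntropy α (A ⊙ B) := by
  have hAB : (A ⊙ B).IsHermitian := hA.isHermitian.hadamard hB.isHermitian
  set S := schurWeights B hAB.eigenvectorUnitary hA.isHermitian.eigenvectorUnitary
  have hS : S ∈ doublyStochastic ℝ (Fin d) :=
    schurWeights_mem_doublyStochastic hB hdiagB hAB.eigenvectorUnitary.2
      hA.isHermitian.eigenvectorUnitary.2
  have hspec : (fun j => eigs (A ⊙ B) j / d) = S *ᵥ fun i => eigs A i / d := by
    ext j
    simp [eigs_eq_eigenvalues hAB, eigs_eq_eigenvalues hA.isHermitian,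
      hA.isHermitian.eigenvalues_hadamard hAB, S, mulVec, dotProduct, Finset.sum_div,
      mul_div_assoc]
  rw [mEntropy_eq_renyiEntropy, mEntropy_eq_renyiEntropy, hspec]
  refine renyiEntropy_le_renyiEntropy_mulVec hα hS (fun i => ?_)
    (sum_eigs_div_eq_one hd hA.isHermitian hdiagA)
  rw [eigs_eq_eigenvalues hA.isHermitian]
  exact div_nonneg (hA.eigenvalues_nonneg i) d.cast_nonneg

theorem max_entropy_le_joint_entropy {d : ℕ} (hd : 0 < d) (α : ℝ) (hα : 0 < α)
    (K₁ K₂ : Matrix (Fin d) (Fin d) ℝ)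
    (hK₁ : K₁.PosSemidef) (hK₂ : K₂.PosSemidef)
    (hdiag₁ : ∀ i, K₁ i i = 1) (hdiag₂ : ∀ i, K₂ i i = 1) :
    max (mEntropy α K₁) (mEntropy α K₂) ≤ mEntropy α (K₁.hadamard K₂) := by
  refine max_le (mEntropy_le_mEntropy_hadamard hd hα hK₁ hK₂ hdiag₁ hdiag₂) ?_
  rw [hadamard_comm]
  exact mEntropy_le_mEntropy_hadamard hd hα hK₂ hK₁ hdiag₂ hdiag₁
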